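/- The Bernstein operators satisfy the commutation rule S_m ∘ S_n = - S_{n-1} ∘ S_{m+1} for all integers m and n. In particular S_m ∘ S_{m+1} = 0. -/

import Mathlib

open scoped Classical

/-- An integer partition: a weakly decreasing sequence of naturals, eventually zero. -/
structure Ptn where
  parts : ℕ → ℕ
  antitone : ∀ i, parts (i + 1) ≤ parts i
  eventually_zero : ∃ N, ∀ n, N ≤ n → parts n = 0

/-- Number of cells of a partition. -/
noncomputable def Ptn.size (μ : Ptn) : ℕ := ∑ᶠ i, μ.parts i

/-- Containment of partitions. -/
def PtnSub (ν μ : Ptn) : Prop := ∀ i, ν.parts i ≤ μ.parts i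

/-- `HS c lam mu` : lam/mu is a horizontal strip of `c` cells. -/
def HS (c : ℕ) (lam mu : Ptn) : Prop :=
  PtnSub mu lam ∧ lam.size = mu.size + c ∧ ∀ i, lam.parts (i + 1) ≤ mu.parts i

/-- `VS c lam mu` : lam/mu is a vertical strip of `c` cells. -/
def VS (c : ℕ) (lam mu : Ptn) : Prop :=
  PtnSub mu lam ∧ lam.size = mu.size + c ∧ ∀ i, lam.parts i ≤ mu.parts i + 1

variable (F : Type) [Field F]

/-- The Schur basis element `s_μ`, viewed as a coefficient function on partitions. -/
noncomputable def sB (μ : Ptn) : Ptn → F := fun lam => if lam = μ then 1 else 0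

/-- Multiplication by the complete homogeneous symmetric function `h_k` (zero for `k < 0`),
acting on Schur coefficient functions via the Pieri rule. -/
noncomputable def Mh (k : ℤ) (P : Ptn → F) : Ptn → F :=
  fun lam => if k < 0 then 0 else ∑ᶠ (mu : Ptn) (_ : HS k.toNat lam mu), P mu

/-- The Hall-adjoint `e_c^⊥` of multiplication by `e_c`, via the dual Pieri rule. -/
noncomputable def eperp (c : ℕ) (P : Ptn → F) : Ptn → F :=
  fun nu => ∑ᶠ (mu : Ptn) (_ : VS c mu nu), P mu

/-- The Hall-adjoint `h_c^⊥` of multiplication by `h_c`, via the dual Pieri rule. -/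
noncomputable def hperp (c : ℕ) (P : Ptn → F) : Ptn → F :=
  fun nu => ∑ᶠ (mu : Ptn) (_ : HS c mu nu), P mu

/-- The Bernstein creation operator `S_m = Σ_{c≥0} (-1)^c M_{h_{m+c}} ∘ e_c^⊥`. -/
noncomputable def Sop (m : ℤ) (P : Ptn → F) : Ptn → F :=
  fun lam => ∑ᶠ c : ℕ, (-1 : F) ^ c * Mh F (m + c) (eperp F c P) lam

/-- The Jing creation operator `H_m = Σ_{c≥0} q^c S_{m+c} ∘ h_c^⊥`. -/
noncomputable def Hop (q : F) (m : ℤ) (P : Ptn → F) : Ptn → F :=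
  fun lam => ∑ᶠ c : ℕ, q ^ c * Sop F (m + c) (hperp F c P) lam

/-- The empty partition. -/
def ptnZero : Ptn := ⟨fun _ => 0, fun _ => le_refl 0, ⟨0, fun _ _ => rfl⟩⟩

/-- The constant symmetric function `1 = s_∅`. -/
noncomputable def oneSym : Ptn → F := sB F ptnZero

/-!
Write `S_m = ∑_c (-1)^c h_{m+c} e_c^⊥`. Moving every `e^⊥` to the right of every `h` with
`e_{c+1}^⊥ h_k = h_k e_{c+1}^⊥ + h_{k-1} e_c^⊥` gives `S_m S_n = X(m,n) - X(m+1,n-1)` with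
`X(a,b) = ∑_{c,d} (-1)^{c+d} h_{a+c} h_{b+d} e_c^⊥ e_d^⊥`, and `X` is symmetric because the `h`'s
commute among themselves and so do the `e^⊥`'s; the rule follows.

All three operator identities are identities between numbers of Pieri paths `λ → μ → ρ`. The
admissible middle partitions `μ` form a box `L ≤ μ ≤ U` with interlacing bounds. The `h`'s
commute by the reflection `μ_i ↦ L_i + U_i - μ_i` of that box, the `e^⊥`'s by conjugation, and
the mixed rule holds because both sides count partitions in boxes of width one, whose numbers of
free rows differ by one, so it becomes Pascal's rule.
-/

theorem ncard_setOf_eq_zero {α : Type*} {p : α → Prop} (h : ∀ a, ¬p a) :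
    {a | p a}.ncard = 0 := by
  simp [h]

namespace Ptn

theorem ext {μ ν : Ptn} (h : μ.parts = ν.parts) : μ = ν := by
  cases μ; cases ν; cases h; rfl

theorem parts_antitone (μ : Ptn) : Antitone μ.parts :=
  antitone_nat_of_succ_le μ.antitone

theorem size_eq_sum_range {μ : Ptn} {M : ℕ} (h : ∀ i, M ≤ i → μ.parts i = 0) :
    μ.size = ∑ i ∈ Finset.range M, μ.parts i := by
  refine finsum_eq_sum_of_support_subset _ fun i hi => ?_
  simp only [Finset.coe_range, Set.mem_Iio]
  by_contra hM
  exact hi (h i (not_lt.1 hM))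

theorem parts_le_size (μ : Ptn) (i : ℕ) : μ.parts i ≤ μ.size := by
  obtain ⟨N, hN⟩ := μ.eventually_zero
  rw [size_eq_sum_range (M := max N (i + 1)) fun j hj => hN j (le_of_max_le_left hj)]
  exact Finset.single_le_sum (fun _ _ => Nat.zero_le _) (by simp)

theorem parts_eq_zero_of_size_le {μ : Ptn} {i : ℕ} (h : μ.size ≤ i) : μ.parts i = 0 := by
  by_contra hi
  obtain ⟨N, hN⟩ := μ.eventually_zero
  have hpos : ∀ j ∈ Finset.range (i + 1), 1 ≤ μ.parts j := fun j hj =>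
    (Nat.one_le_iff_ne_zero.2 hi).trans (μ.parts_antitone (Finset.mem_range_succ_iff.1 hj))
  have : i + 1 ≤ μ.size := by
    rw [size_eq_sum_range (M := max N (i + 1)) fun j hj => hN j (le_of_max_le_left hj)]
    calc i + 1 = ∑ _j ∈ Finset.range (i + 1), 1 := by simp
      _ ≤ ∑ j ∈ Finset.range (i + 1), μ.parts j := Finset.sum_le_sum hpos
      _ ≤ _ := Finset.sum_le_sum_of_subset (Finset.range_subset_range.2 (le_max_right _ _))
  omega

theorem finite_setOf_size_le (n : ℕ) : {μ : Ptn | μ.size ≤ n}.Finite := by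
  refine Set.Finite.of_finite_image (f := fun μ (i : Fin n) => μ.parts i) ?_ ?_
  · refine (Set.Finite.pi fun _ => Set.finite_Iic n).subset ?_
    rintro _ ⟨μ, hμ, rfl⟩ i -
    exact (μ.parts_le_size i).trans hμ
  · intro μ hμ ν hν h
    refine ext (funext fun i => ?_)
    by_cases hi : i < n
    · exact congrFun h ⟨i, hi⟩
    · rw [parts_eq_zero_of_size_le (le_trans hμ (not_lt.1 hi)),
        parts_eq_zero_of_size_le (le_trans hν (not_lt.1 hi))]

theorem eq_of_ptnSub_of_size_eq {μ ν : Ptn} (h : PtnSub ν μ) (hs : μ.size = ν.size) : μ = ν := by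
  refine ext (funext fun i => ?_)
  obtain ⟨N, hN⟩ := μ.eventually_zero
  have hμ : ∀ j, max N (i + 1) ≤ j → μ.parts j = 0 := fun j hj => hN j (le_of_max_le_left hj)
  have hν : ∀ j, max N (i + 1) ≤ j → ν.parts j = 0 := fun j hj =>
    Nat.le_zero.1 ((h j).trans (hμ j hj).le)
  rw [size_eq_sum_range hμ, size_eq_sum_range hν] at hs
  exact ((Finset.sum_eq_sum_iff_of_le fun j _ => h j).1 hs.symm i
    (Finset.mem_range.2 (lt_of_lt_of_le i.lt_succ_self (le_max_right _ _)))).symm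

theorem finite_setOf_HS (k : ℕ) (lam : Ptn) : {mu : Ptn | HS k lam mu}.Finite :=
  (finite_setOf_size_le lam.size).subset fun _ h => show _ ≤ lam.size by have := h.2.1; omega

theorem finite_setOf_VS (c : ℕ) (nu : Ptn) : {mu : Ptn | VS c mu nu}.Finite :=
  (finite_setOf_size_le (nu.size + c)).subset fun _ h => h.2.1.le

theorem HS_zero_iff {lam mu : Ptn} : HS 0 lam mu ↔ mu = lam :=
  ⟨fun h => (eq_of_ptnSub_of_size_eq h.1 h.2.1).symm,
    by rintro rfl; exact ⟨fun _ => le_rfl, rfl, fun i => Ptn.antitone _ i⟩⟩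

theorem VS_zero_iff {lam mu : Ptn} : VS 0 lam mu ↔ lam = mu :=
  ⟨fun h => eq_of_ptnSub_of_size_eq h.1 h.2.1,
    by rintro rfl; exact ⟨fun _ => le_rfl, rfl, fun _ => Nat.le_succ _⟩⟩

/-! ### Conjugation -/

/-- The length of column `i` of `μ`. -/
noncomputable def conjParts (μ : Ptn) (i : ℕ) : ℕ := sInf {n | μ.parts n ≤ i}

theorem lt_conjParts_iff (μ : Ptn) (i j : ℕ) : j < μ.conjParts i ↔ i < μ.parts j := by
  obtain ⟨N, hN⟩ := μ.eventually_zero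
  have hne : {n | μ.parts n ≤ i}.Nonempty := ⟨N, by simp [hN N le_rfl]⟩
  have hmem : μ.parts (μ.conjParts i) ≤ i := Nat.sInf_mem hne
  constructor
  · intro h
    by_contra hc
    exact absurd (Nat.sInf_le (s := {n | μ.parts n ≤ i}) (not_lt.1 hc)) (not_le.2 h)
  · intro h
    by_contra hc
    exact absurd ((μ.parts_antitone (not_lt.1 hc)).trans hmem) (not_le.2 h)

noncomputable def conj (μ : Ptn) : Ptn where
  parts := μ.conjParts
  antitone i := by
    by_contra h
    have h1 := (μ.lt_conjParts_iff (i + 1) (μ.conjParts i)).1 (not_le.1 h)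
    have h2 := (μ.lt_conjParts_iff i (μ.conjParts i)).2 (by omega)
    omega
  eventually_zero := ⟨μ.parts 0, fun i hi => by
    by_contra h
    have := (μ.lt_conjParts_iff i 0).1 (Nat.pos_of_ne_zero h)
    omega⟩

theorem lt_conj_parts_iff (μ : Ptn) (i j : ℕ) : j < μ.conj.parts i ↔ i < μ.parts j :=
  μ.lt_conjParts_iff i j

theorem conj_conj (μ : Ptn) : μ.conj.conj = μ := by
  refine ext (funext fun j => le_antisymm ?_ ?_) <;> refine le_of_forall_lt fun x hx => ?_
  · rwa [lt_conj_parts_iff, lt_conj_parts_iff] at hx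
  · rwa [lt_conj_parts_iff, lt_conj_parts_iff]

theorem conj_involutive : Function.Involutive conj := conj_conj

theorem ptnSub_conj {ν μ : Ptn} (h : PtnSub ν μ) : PtnSub ν.conj μ.conj := fun i =>
  le_of_forall_lt fun j hj =>
    (μ.lt_conj_parts_iff i j).2 (lt_of_lt_of_le ((ν.lt_conj_parts_iff i j).1 hj) (h j))

theorem size_conj (μ : Ptn) : μ.conj.size = μ.size := by
  set M := μ.parts 0 + μ.size + 1
  have hμ : ∀ i, M ≤ i → μ.parts i = 0 := fun i hi => parts_eq_zero_of_size_le (by omega)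
  have hc : ∀ i, M ≤ i → μ.conj.parts i = 0 := fun i hi => by
    by_contra h
    have := (μ.lt_conj_parts_iff i 0).1 (Nat.pos_of_ne_zero h)
    omega
  have hcount : ∀ i, μ.conj.parts i = ∑ j ∈ Finset.range M, if i < μ.parts j then 1 else 0 := by
    intro i
    rw [← Finset.card_filter]
    convert (Finset.card_range (μ.conj.parts i)).symm using 2
    ext j
    simp only [Finset.mem_filter, Finset.mem_range]
    rw [← lt_conj_parts_iff]
    constructor
    · exact And.right
    · intro h
      refine ⟨lt_of_not_ge fun hj => ?_, h⟩
      have := (μ.lt_conj_parts_iff i j).1 h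
      rw [hμ j hj] at this
      omega
  rw [size_eq_sum_range hc, size_eq_sum_range hμ, Finset.sum_congr rfl fun i _ => hcount i,
    Finset.sum_comm]
  refine Finset.sum_congr rfl fun j _ => ?_
  rw [← Finset.card_filter]
  convert Finset.card_range (μ.parts j) using 2
  ext i
  simp only [Finset.mem_filter, Finset.mem_range, and_iff_right_iff_imp]
  intro h
  have := μ.parts_le_size j
  omega

theorem VS_conj_of_HS {c : ℕ} {lam mu : Ptn} (h : HS c lam mu) : VS c lam.conj mu.conj := by
  obtain ⟨hsub, hsize, hrow⟩ := h
  refine ⟨ptnSub_conj hsub, by rw [size_conj, size_conj, hsize], fun i => ?_⟩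
  by_contra hc
  have h1 := (lam.lt_conj_parts_iff i (mu.conj.parts i + 1)).1 (by omega)
  have h2 := (mu.lt_conj_parts_iff i (mu.conj.parts i)).2 (by have := hrow (mu.conj.parts i); omega)
  omega

theorem HS_conj_of_VS {c : ℕ} {lam mu : Ptn} (h : VS c lam mu) : HS c lam.conj mu.conj := by
  obtain ⟨hsub, hsize, hcol⟩ := h
  refine ⟨ptnSub_conj hsub, by rw [size_conj, size_conj, hsize], fun i => ?_⟩
  by_contra hc
  have h1 := (lam.lt_conj_parts_iff (i + 1) (mu.conj.parts i)).1 (by omega)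
  have h2 := (mu.lt_conj_parts_iff i (mu.conj.parts i)).2 (by have := hcol (mu.conj.parts i); omega)
  omega

theorem VS_iff_HS_conj {c : ℕ} {lam mu : Ptn} : VS c lam mu ↔ HS c lam.conj mu.conj :=
  ⟨HS_conj_of_VS, fun h => by simpa only [conj_conj] using VS_conj_of_HS h⟩

/-! ### Partitions in a box -/

def InBox (L U : ℕ → ℕ) (μ : Ptn) : Prop := ∀ i, L i ≤ μ.parts i ∧ μ.parts i ≤ U i

section Box

variable {L U : ℕ → ℕ} {M : ℕ}

theorem InBox.le {μ : Ptn} (h : μ.InBox L U) (i : ℕ) : L i ≤ U i :=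
  (h i).1.trans (h i).2

theorem setOf_inBox_and_eq_empty (h : ¬∀ i, L i ≤ U i) (p : Ptn → Prop) :
    {μ : Ptn | μ.InBox L U ∧ p μ} = ∅ :=
  Set.eq_empty_of_forall_notMem fun _ hμ => h hμ.1.le

def ofInBox (hLU : ∀ i, U (i + 1) ≤ L i) (hM : ∀ i, M ≤ i → U i = 0) (p : ℕ → ℕ)
    (hp : ∀ i, L i ≤ p i ∧ p i ≤ U i) : Ptn where
  parts := p
  antitone i := (hp (i + 1)).2.trans ((hLU i).trans (hp i).1)
  eventually_zero := ⟨M, fun i hi => Nat.le_zero.1 ((hp i).2.trans (hM i hi).le)⟩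

theorem InBox.size_eq (hM : ∀ i, M ≤ i → U i = 0) {μ : Ptn} (hμ : μ.InBox L U) :
    μ.size = ∑ i ∈ Finset.range M, μ.parts i :=
  size_eq_sum_range fun i hi => Nat.le_zero.1 ((hμ i).2.trans (hM i hi).le)

theorem InBox.sum_le_size (hM : ∀ i, M ≤ i → U i = 0) {μ : Ptn} (hμ : μ.InBox L U) :
    ∑ i ∈ Finset.range M, L i ≤ μ.size :=
  (hμ.size_eq hM).symm ▸ Finset.sum_le_sum fun i _ => (hμ i).1

theorem InBox.size_le_sum (hM : ∀ i, M ≤ i → U i = 0) {μ : Ptn} (hμ : μ.InBox L U) :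
    μ.size ≤ ∑ i ∈ Finset.range M, U i :=
  (hμ.size_eq hM).symm ▸ Finset.sum_le_sum fun i _ => (hμ i).2

def reflect (hLU : ∀ i, U (i + 1) ≤ L i) (hM : ∀ i, M ≤ i → U i = 0) (μ : Ptn)
    (hμ : μ.InBox L U) : Ptn :=
  ofInBox hLU hM (fun i => L i + (U i - μ.parts i)) fun i => by have := hμ i; omega

theorem inBox_reflect (hLU : ∀ i, U (i + 1) ≤ L i) (hM : ∀ i, M ≤ i → U i = 0) {μ : Ptn}
    (hμ : μ.InBox L U) : (reflect hLU hM μ hμ).InBox L U := fun i => by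
  have := hμ i
  simp only [reflect, ofInBox]
  omega

theorem size_reflect_add (hLU : ∀ i, U (i + 1) ≤ L i) (hM : ∀ i, M ≤ i → U i = 0) {μ : Ptn}
    (hμ : μ.InBox L U) :
    (reflect hLU hM μ hμ).size + μ.size = ∑ i ∈ Finset.range M, (L i + U i) := by
  rw [(inBox_reflect hLU hM hμ).size_eq hM, hμ.size_eq hM, ← Finset.sum_add_distrib]
  refine Finset.sum_congr rfl fun i _ => ?_
  have := hμ i
  simp only [reflect, ofInBox]
  omega

theorem reflect_reflect (hLU : ∀ i, U (i + 1) ≤ L i) (hM : ∀ i, M ≤ i → U i = 0) {μ : Ptn}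
    (hμ : μ.InBox L U) : reflect hLU hM (reflect hLU hM μ hμ) (inBox_reflect hLU hM hμ) = μ :=
  ext (funext fun i => by have := hμ i; simp only [reflect, ofInBox]; omega)

theorem ncard_inBox_size_eq_comm (hLU : ∀ i, U (i + 1) ≤ L i) (hM : ∀ i, M ≤ i → U i = 0)
    {s t : ℕ} (hst : s + t = ∑ i ∈ Finset.range M, (L i + U i)) :
    {μ : Ptn | μ.InBox L U ∧ μ.size = s}.ncard = {μ : Ptn | μ.InBox L U ∧ μ.size = t}.ncard := by
  refine Set.ncard_congr (fun μ hμ => reflect hLU hM μ hμ.1) (fun μ hμ => ?_)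
    (fun μ ν hμ hν h => ?_) (fun ν hν => ?_)
  · have := size_reflect_add hLU hM hμ.1
    have := hμ.2
    exact ⟨inBox_reflect hLU hM hμ.1, by omega⟩
  · rw [← reflect_reflect hLU hM hμ.1, ← reflect_reflect hLU hM hν.1]
    congr 1
  · have := size_reflect_add hLU hM hν.1
    have := hν.2
    exact ⟨reflect hLU hM ν hν.1, ⟨inBox_reflect hLU hM hν.1, by omega⟩,
      reflect_reflect hLU hM hν.1⟩

def freeRows (L U : ℕ → ℕ) (M : ℕ) : Finset ℕ := (Finset.range M).filter fun i => L i < U i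

theorem sum_eq_sum_add_card_freeRows (hLe : ∀ i, L i ≤ U i) (hU : ∀ i, U i ≤ L i + 1) :
    ∑ i ∈ Finset.range M, U i = ∑ i ∈ Finset.range M, L i + (freeRows L U M).card := by
  rw [freeRows, Finset.card_filter, ← Finset.sum_add_distrib]
  refine Finset.sum_congr rfl fun i _ => ?_
  have := hLe i; have := hU i
  split_ifs <;> omega

theorem InBox.size_eq_sum_add_card (hM : ∀ i, M ≤ i → U i = 0) (hU : ∀ i, U i ≤ L i + 1)
    {μ : Ptn} (hμ : μ.InBox L U) :
    μ.size = ∑ i ∈ Finset.range M, L i +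
      ((freeRows L U M).filter fun i => L i < μ.parts i).card := by
  rw [hμ.size_eq hM, freeRows, Finset.filter_filter, Finset.card_filter,
    ← Finset.sum_add_distrib]
  refine Finset.sum_congr rfl fun i _ => ?_
  have := hμ i; have := hU i
  split_ifs <;> omega

theorem InBox.mem_filter_freeRows_iff (hM : ∀ i, M ≤ i → U i = 0) {μ : Ptn} (hμ : μ.InBox L U)
    (i : ℕ) : i ∈ (freeRows L U M).filter (fun i => L i < μ.parts i) ↔ L i < μ.parts i := by
  simp only [freeRows, Finset.mem_filter, Finset.mem_range, and_iff_right_iff_imp]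
  intro h
  have := hμ i
  exact ⟨lt_of_not_ge fun hi => by have := hM i hi; omega, by omega⟩

theorem inBox_add_indicator (hLe : ∀ i, L i ≤ U i) {S : Finset ℕ} (hS : S ⊆ freeRows L U M)
    (i : ℕ) : L i ≤ L i + (if i ∈ S then 1 else 0) ∧ L i + (if i ∈ S then 1 else 0) ≤ U i := by
  have := hLe i
  split_ifs with hi
  · have := (Finset.mem_filter.1 (hS hi)).2; omega
  · omega

/-- In a box of width at most one, a partition is determined by its set of raised rows. -/
theorem ncard_inBox_size_eq_sum_add (hLU : ∀ i, U (i + 1) ≤ L i) (hM : ∀ i, M ≤ i → U i = 0)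
    (hLe : ∀ i, L i ≤ U i) (hU : ∀ i, U i ≤ L i + 1) (j : ℕ) :
    {μ : Ptn | μ.InBox L U ∧ μ.size = ∑ i ∈ Finset.range M, L i + j}.ncard =
      (freeRows L U M).card.choose j := by
  rw [← Finset.card_powersetCard, ← Set.ncard_coe_finset]
  refine Set.ncard_congr (fun μ _ => (freeRows L U M).filter fun i => L i < μ.parts i)
    (fun μ hμ => ?_) (fun μ ν hμ hν h => ext (funext fun i => ?_)) (fun S hS => ?_)
  · have := hμ.1.size_eq_sum_add_card hM hU
    have := hμ.2
    exact Finset.mem_powersetCard.2 ⟨Finset.filter_subset _ _, by omega⟩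
  · have := Finset.ext_iff.1 h i
    rw [hμ.1.mem_filter_freeRows_iff hM, hν.1.mem_filter_freeRows_iff hM] at this
    have := hμ.1 i; have := hν.1 i; have := hU i
    omega
  · obtain ⟨hSsub, hScard⟩ := Finset.mem_powersetCard.1 hS
    set μ := ofInBox hLU hM _ (inBox_add_indicator hLe hSsub)
    have hμ : μ.InBox L U := inBox_add_indicator hLe hSsub
    have hfilter : ((freeRows L U M).filter fun i => L i < μ.parts i) = S := by
      ext i
      rw [hμ.mem_filter_freeRows_iff hM]
      change L i < L i + (if i ∈ S then 1 else 0) ↔ i ∈ S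
      split_ifs with hi <;> simp [hi]
    refine ⟨μ, ⟨hμ, ?_⟩, hfilter⟩
    rw [hμ.size_eq_sum_add_card hM hU, hfilter, hScard]

theorem ncard_inBox_size_add_eq_sum (hLU : ∀ i, U (i + 1) ≤ L i) (hM : ∀ i, M ≤ i → U i = 0)
    (hLe : ∀ i, L i ≤ U i) (hU : ∀ i, U i ≤ L i + 1) (j : ℕ) :
    {μ : Ptn | μ.InBox L U ∧ μ.size + j = ∑ i ∈ Finset.range M, U i}.ncard =
      (freeRows L U M).card.choose j := by
  have hsum := sum_eq_sum_add_card_freeRows (M := M) hLe hU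
  by_cases hj : j ≤ (freeRows L U M).card
  · rw [← Nat.choose_symm hj, ← ncard_inBox_size_eq_sum_add hLU hM hLe hU]
    congr 1
    ext μ
    exact and_congr_right fun _ => by omega
  · rw [Nat.choose_eq_zero_of_lt (not_le.1 hj),
      ncard_setOf_eq_zero fun μ hμ => by have := hμ.1.sum_le_size hM; omega]

end Box

/-! ### Pieri paths -/

/-- With `hsUpper`, the box of all `μ` such that `λ/μ` and `μ/ν` are horizontal strips. -/
def hsLower (lam nu : Ptn) (i : ℕ) : ℕ := max (nu.parts i) (lam.parts (i + 1))

def hsUpper (lam nu : Ptn) : ℕ → ℕ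
  | 0 => lam.parts 0
  | i + 1 => min (lam.parts (i + 1)) (nu.parts i)

theorem hsUpper_succ_le_hsLower (lam nu : Ptn) (i : ℕ) :
    hsUpper lam nu (i + 1) ≤ hsLower lam nu i :=
  (min_le_right _ _).trans (le_max_left _ _)

theorem hsUpper_eq_zero {lam nu : Ptn} {N : ℕ} (hlam : ∀ i, N ≤ i → lam.parts i = 0) (i : ℕ)
    (hi : N ≤ i) : hsUpper lam nu i = 0 := by
  cases i with
  | zero => exact hlam 0 hi
  | succ i => exact Nat.le_zero.1 ((min_le_left _ _).trans (hlam (i + 1) hi).le)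

theorem HS_HS_iff {A B : ℕ} {lam mu nu : Ptn} :
    HS A lam mu ∧ HS B mu nu ↔
      mu.InBox (hsLower lam nu) (hsUpper lam nu) ∧ mu.size = nu.size + B ∧
        lam.size = nu.size + A + B := by
  constructor
  · rintro ⟨⟨hml, hsA, hrowA⟩, ⟨hnm, hsB, hrowB⟩⟩
    refine ⟨fun i => ⟨max_le (hnm i) (hrowA i), ?_⟩, hsB, by omega⟩
    cases i with
    | zero => exact hml 0
    | succ i => exact le_min (hml (i + 1)) (hrowB i)
  · rintro ⟨hbox, hsB, hsA⟩
    refine ⟨⟨fun i => ?_, by omega, fun i => (le_max_right _ _).trans (hbox i).1⟩,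
      ⟨fun i => (le_max_left _ _).trans (hbox i).1, hsB,
        fun i => (hbox (i + 1)).2.trans (min_le_right _ _)⟩⟩
    cases i with
    | zero => exact (hbox 0).2
    | succ i => exact (hbox (i + 1)).2.trans (min_le_left _ _)

theorem sum_hsLower_add_hsUpper {lam nu : Ptn} {M : ℕ} (hlam : ∀ i, M ≤ i → lam.parts i = 0)
    (hnu : ∀ i, M ≤ i → nu.parts i = 0) :
    ∑ i ∈ Finset.range (M + 1), (hsLower lam nu i + hsUpper lam nu i) = lam.size + nu.size := by
  have hpair : ∀ i, hsLower lam nu i + hsUpper lam nu (i + 1) = nu.parts i + lam.parts (i + 1) :=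
    fun i => by simp only [hsLower, hsUpper]; omega
  have hlast : hsLower lam nu M = 0 := by
    simp [hsLower, hnu M le_rfl, hlam (M + 1) (by omega)]
  rw [Finset.sum_add_distrib, Finset.sum_range_succ, hlast, Finset.sum_range_succ',
    size_eq_sum_range (M := M + 1) fun i hi => hlam i (by omega), Finset.sum_range_succ',
    size_eq_sum_range hnu, add_zero, ← add_assoc, ← Finset.sum_add_distrib,
    Finset.sum_congr rfl fun i _ => hpair i, Finset.sum_add_distrib]
  simp only [hsUpper]
  ring

theorem ncard_HS_HS_comm (A B : ℕ) (lam nu : Ptn) :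
    {mu | HS A lam mu ∧ HS B mu nu}.ncard = {mu | HS B lam mu ∧ HS A mu nu}.ncard := by
  simp_rw [HS_HS_iff]
  by_cases hsize : lam.size = nu.size + A + B
  · obtain ⟨N, hN⟩ := lam.eventually_zero
    obtain ⟨N', hN'⟩ := nu.eventually_zero
    have hlam : ∀ i, N + N' ≤ i → lam.parts i = 0 := fun i hi => hN i (by omega)
    have hnu : ∀ i, N + N' ≤ i → nu.parts i = 0 := fun i hi => hN' i (by omega)
    have hsum := sum_hsLower_add_hsUpper hlam hnu
    simp only [hsize, show nu.size + B + A = nu.size + A + B by ring, and_true]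
    exact ncard_inBox_size_eq_comm (M := N + N' + 1) (hsUpper_succ_le_hsLower lam nu)
      (fun i hi => hsUpper_eq_zero hlam i (by omega)) (by omega)
  · simp only [hsize, show ¬lam.size = nu.size + B + A by omega, and_false, Set.ofPred_false]

theorem ncard_VS_VS_comm (c d : ℕ) (nu rho : Ptn) :
    {mu | VS c mu nu ∧ VS d rho mu}.ncard = {mu | VS d mu nu ∧ VS c rho mu}.ncard := by
  have hconj : ∀ c d, {mu | VS c mu nu ∧ VS d rho mu} =
      conj ⁻¹' {mu | HS d rho.conj mu ∧ HS c mu nu.conj} := fun c d => by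
    ext mu
    simp only [Set.mem_preimage, Set.mem_ofPred_eq, VS_iff_HS_conj (c := c),
      VS_iff_HS_conj (c := d), and_comm]
  have hrange : ∀ s : Set Ptn, s ⊆ Set.range conj := fun s =>
    conj_involutive.surjective.range_eq ▸ Set.subset_univ s
  simp only [hconj, Set.ncard_preimage_of_injective_subset_range conj_involutive.injective
    (hrange _), ncard_HS_HS_comm]

/-- With `upUpper`, the box of all `λ` such that `λ/ν` is a vertical and `λ/ρ` a horizontal
strip. -/
def upLower (nu rho : Ptn) (i : ℕ) : ℕ := max (nu.parts i) (rho.parts i)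

def upUpper (nu rho : Ptn) : ℕ → ℕ
  | 0 => nu.parts 0 + 1
  | i + 1 => min (nu.parts (i + 1) + 1) (rho.parts i)

/-- With `downUpper`, the box of all `μ` such that `ν/μ` is a horizontal and `ρ/μ` a vertical
strip. -/
def downLower (nu rho : Ptn) (i : ℕ) : ℕ := max (nu.parts (i + 1)) (rho.parts i - 1)

def downUpper (nu rho : Ptn) (i : ℕ) : ℕ := min (nu.parts i) (rho.parts i)

theorem VS_HS_iff {c k : ℕ} {lam nu rho : Ptn} :
    VS c lam nu ∧ HS k lam rho ↔
      lam.InBox (upLower nu rho) (upUpper nu rho) ∧ lam.size = nu.size + c ∧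
        nu.size + c = rho.size + k := by
  constructor
  · rintro ⟨⟨hnl, hsc, hcol⟩, ⟨hrl, hsk, hrow⟩⟩
    refine ⟨fun i => ⟨max_le (hnl i) (hrl i), ?_⟩, hsc, by omega⟩
    cases i with
    | zero => exact hcol 0
    | succ i => exact le_min (hcol (i + 1)) (hrow i)
  · rintro ⟨hbox, hsc, hsk⟩
    refine ⟨⟨fun i => (le_max_left _ _).trans (hbox i).1, hsc, fun i => ?_⟩,
      ⟨fun i => (le_max_right _ _).trans (hbox i).1, by omega,
        fun i => (hbox (i + 1)).2.trans (min_le_right _ _)⟩⟩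
    cases i with
    | zero => exact (hbox 0).2
    | succ i => exact (hbox (i + 1)).2.trans (min_le_left _ _)

theorem HS_VS_iff {c k : ℕ} {mu nu rho : Ptn} :
    HS k nu mu ∧ VS c rho mu ↔
      mu.InBox (downLower nu rho) (downUpper nu rho) ∧ mu.size + c = rho.size ∧
        nu.size + c = rho.size + k := by
  constructor
  · rintro ⟨⟨hmn, hsk, hrow⟩, ⟨hmr, hsc, hcol⟩⟩
    exact ⟨fun i => ⟨max_le (hrow i) (by have := hcol i; omega), le_min (hmn i) (hmr i)⟩,
      by omega, by omega⟩
  · rintro ⟨hbox, hsc, hsk⟩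
    exact ⟨⟨fun i => (hbox i).2.trans (min_le_left _ _), by omega,
        fun i => (le_max_left _ _).trans (hbox i).1⟩,
      ⟨fun i => (hbox i).2.trans (min_le_right _ _), by omega,
        fun i => by have := (le_max_right _ _).trans (hbox i).1; omega⟩⟩

theorem upLower_le_upUpper_iff (nu rho : Ptn) :
    (∀ i, upLower nu rho i ≤ upUpper nu rho i) ↔ ∀ i, downLower nu rho i ≤ downUpper nu rho i := by
  constructor
  · intro h i
    have h0 := h i
    have h1 := h (i + 1)
    have := nu.antitone i
    cases i <;> simp only [upLower, upUpper, downLower, downUpper] at * <;> omega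
  · intro h i
    cases i with
    | zero => have := h 0; simp only [upLower, upUpper, downLower, downUpper] at *; omega
    | succ i =>
      have := h i; have := h (i + 1); have := rho.antitone i
      simp only [upLower, upUpper, downLower, downUpper] at *; omega

theorem upUpper_succ_le_upLower (nu rho : Ptn) (i : ℕ) :
    upUpper nu rho (i + 1) ≤ upLower nu rho i :=
  (min_le_right _ _).trans (le_max_right _ _)

theorem upUpper_le_upLower_add_one (nu rho : Ptn) (i : ℕ) :
    upUpper nu rho i ≤ upLower nu rho i + 1 := by
  cases i <;> simp only [upLower, upUpper] <;> omega

theorem upUpper_eq_zero {nu rho : Ptn} {N : ℕ} (hrho : ∀ i, N ≤ i → rho.parts i = 0) (i : ℕ)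
    (hi : N + 1 ≤ i) : upUpper nu rho i = 0 := by
  obtain ⟨i, rfl⟩ : ∃ j, i = j + 1 := ⟨i - 1, by omega⟩
  simp [upUpper, hrho i (by omega)]

theorem downUpper_succ_le_downLower (nu rho : Ptn) (i : ℕ) :
    downUpper nu rho (i + 1) ≤ downLower nu rho i := by
  simp only [downLower, downUpper]
  omega

theorem downUpper_le_downLower_add_one (nu rho : Ptn) (i : ℕ) :
    downUpper nu rho i ≤ downLower nu rho i + 1 := by
  simp only [downLower, downUpper]
  omega

theorem downUpper_eq_zero {nu rho : Ptn} {N : ℕ} (hnu : ∀ i, N ≤ i → nu.parts i = 0) (i : ℕ)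
    (hi : N ≤ i) : downUpper nu rho i = 0 := by
  simp [downUpper, hnu i hi]

/-- Row by row, the difference of the free-row indicators telescopes along the indicator of
`ν i < upUpper ν ρ i`, which is `1` in row `0` and `0` below both partitions. -/
theorem card_freeRows_up {nu rho : Ptn} {N : ℕ} (hle : ∀ i, downLower nu rho i ≤ downUpper nu rho i)
    (hnu : ∀ i, N ≤ i → nu.parts i = 0) (hrho : ∀ i, N ≤ i → rho.parts i = 0) :
    (freeRows (upLower nu rho) (upUpper nu rho) (N + 1)).card =
      (freeRows (downLower nu rho) (downUpper nu rho) (N + 1)).card + 1 := by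
  let x : ℕ → ℕ := fun i => if nu.parts i < upUpper nu rho i then 1 else 0
  have hstep : ∀ i, (if upLower nu rho i < upUpper nu rho i then 1 else 0) + x (i + 1) =
      (if downLower nu rho i < downUpper nu rho i then 1 else 0) + x i := by
    intro i
    have h1 := hle i
    have h2 := nu.antitone i
    dsimp only [x]
    cases i with
    | zero =>
      split_ifs <;> simp only [upLower, upUpper, downLower, downUpper] at * <;> omega
    | succ i =>
      have := rho.antitone i
      split_ifs <;> simp only [upLower, upUpper, downLower, downUpper] at * <;> omega
  have htel := Finset.sum_congr (s₁ := Finset.range (N + 1)) rfl fun i _ => hstep i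
  have hshift := (Finset.sum_range_succ' x (N + 1)).symm.trans (Finset.sum_range_succ x (N + 1))
  have h0 : x 0 = 1 := by simp [x, upUpper]
  have hlast : x (N + 1) = 0 := by simp [x, upUpper, hnu (N + 1) (by omega), hrho N le_rfl]
  rw [Finset.sum_add_distrib, Finset.sum_add_distrib] at htel
  rw [freeRows, freeRows, Finset.card_filter, Finset.card_filter]
  omega

theorem sum_upLower_add_sum_downUpper {nu rho : Ptn} {M : ℕ} (hnu : ∀ i, M ≤ i → nu.parts i = 0)
    (hrho : ∀ i, M ≤ i → rho.parts i = 0) :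
    ∑ i ∈ Finset.range M, upLower nu rho i + ∑ i ∈ Finset.range M, downUpper nu rho i =
      nu.size + rho.size := by
  rw [← Finset.sum_add_distrib, size_eq_sum_range hnu, size_eq_sum_range hrho,
    ← Finset.sum_add_distrib]
  exact Finset.sum_congr rfl fun i _ => max_add_min _ _

/-- Pascal's rule for the two boxes: the up box has one more free row, and its sizes are
offset from those of the down box by `∑ upLower + ∑ downUpper = |ν| + |ρ|`. -/
theorem ncard_up_eq_add_ncard_down {nu rho : Ptn} {N c : ℕ}
    (hle : ∀ i, downLower nu rho i ≤ downUpper nu rho i) (hnu : ∀ i, N ≤ i → nu.parts i = 0)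
    (hrho : ∀ i, N ≤ i → rho.parts i = 0) :
    {lam : Ptn | lam.InBox (upLower nu rho) (upUpper nu rho) ∧
        lam.size = nu.size + (c + 1)}.ncard =
      {mu : Ptn | mu.InBox (downLower nu rho) (downUpper nu rho) ∧
          mu.size + (c + 1) = rho.size}.ncard +
        {mu : Ptn | mu.InBox (downLower nu rho) (downUpper nu rho) ∧
          mu.size + c = rho.size}.ncard := by
  have hup := ncard_inBox_size_eq_sum_add (upUpper_succ_le_upLower nu rho) (upUpper_eq_zero hrho)
    ((upLower_le_upUpper_iff nu rho).2 hle) (upUpper_le_upLower_add_one nu rho)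
  have hMdn : ∀ i, N + 1 ≤ i → downUpper nu rho i = 0 := fun i hi =>
    downUpper_eq_zero hnu i (by omega)
  have hdn := ncard_inBox_size_add_eq_sum (downUpper_succ_le_downLower nu rho) hMdn hle
    (downUpper_le_downLower_add_one nu rho)
  have hsum := sum_upLower_add_sum_downUpper (M := N + 1) (fun i hi => hnu i (by omega))
    (fun i hi => hrho i (by omega))
  have hdnD := fun (mu : Ptn) (h : mu.InBox (downLower nu rho) (downUpper nu rho)) =>
    h.size_le_sum hMdn
  set D := ∑ i ∈ Finset.range (N + 1), downUpper nu rho i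
  set X := ∑ i ∈ Finset.range (N + 1), upLower nu rho i
  rcases le_or_gt X (nu.size + (c + 1)) with hx | hx
  · obtain ⟨j, hj⟩ := Nat.exists_eq_add_of_le hx
    have hdn1 : {mu : Ptn | mu.InBox (downLower nu rho) (downUpper nu rho) ∧
        mu.size + (c + 1) = rho.size} =
        {mu | mu.InBox (downLower nu rho) (downUpper nu rho) ∧ mu.size + j = D} :=
      Set.ext fun _ => and_congr_right fun _ => by omega
    rw [hj, hup, card_freeRows_up hle hnu hrho, hdn1, hdn]
    cases j with
    | zero =>
      rw [ncard_setOf_eq_zero fun mu hmu => by have := hdnD mu hmu.1; omega]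
      simp
    | succ j =>
      have hdn0 : {mu : Ptn | mu.InBox (downLower nu rho) (downUpper nu rho) ∧
          mu.size + c = rho.size} =
          {mu | mu.InBox (downLower nu rho) (downUpper nu rho) ∧ mu.size + j = D} :=
        Set.ext fun _ => and_congr_right fun _ => by omega
      rw [hdn0, hdn, Nat.choose_succ_succ', add_comm]
  · rw [ncard_setOf_eq_zero fun lam hlam => by
        have := hlam.1.sum_le_size (upUpper_eq_zero hrho); omega,
      ncard_setOf_eq_zero fun mu hmu => by have := hdnD mu hmu.1; omega,
      ncard_setOf_eq_zero fun mu hmu => by have := hdnD mu hmu.1; omega]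

theorem ncard_VS_HS_succ (nu rho : Ptn) (c k : ℕ) :
    {lam | VS (c + 1) lam nu ∧ HS (k + 1) lam rho}.ncard =
      {mu | HS (k + 1) nu mu ∧ VS (c + 1) rho mu}.ncard +
        {mu | HS k nu mu ∧ VS c rho mu}.ncard := by
  simp_rw [VS_HS_iff, HS_VS_iff]
  by_cases hc : nu.size + c = rho.size + k
  swap
  · simp [show ¬nu.size + (c + 1) = rho.size + (k + 1) by omega, hc]
  simp only [iff_true_intro hc,
    iff_true_intro (show nu.size + (c + 1) = rho.size + (k + 1) by omega), and_true]
  by_cases hle : ∀ i, downLower nu rho i ≤ downUpper nu rho i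
  · obtain ⟨N, hN⟩ := nu.eventually_zero
    obtain ⟨N', hN'⟩ := rho.eventually_zero
    exact ncard_up_eq_add_ncard_down (N := N + N') hle (fun i hi => hN i (by omega))
      (fun i hi => hN' i (by omega))
  · rw [setOf_inBox_and_eq_empty ((upLower_le_upUpper_iff nu rho).not.2 hle),
      setOf_inBox_and_eq_empty hle, setOf_inBox_and_eq_empty hle]
    simp

end Ptn

/-! ### Operators given by relations -/

section RelSum

variable {α ι R : Type*} [Semiring R] {r s : α → α → Prop}

noncomputable def relSum (r : α → α → Prop) (P : α → R) (a : α) : R := ∑ᶠ (b) (_ : r a b), P b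

noncomputable def pathCount (r s : α → α → Prop) (a c : α) : ℕ := {b | r a b ∧ s b c}.ncard

theorem relSum_eq_sum {a : α} (hr : {b | r a b}.Finite) (P : α → R) :
    relSum r P a = ∑ b ∈ hr.toFinset, P b := by
  rw [← finsum_mem_coe_finset, Set.Finite.coe_toFinset]
  rfl

theorem relSum_eq_zero {a : α} {P : α → R} (h : ∀ b, r a b → P b = 0) : relSum r P a = 0 :=
  finsum_eq_zero_of_forall_eq_zero fun b => by by_cases hb : r a b <;> simp [hb, h]

noncomputable def relSumₗ (r : α → α → Prop) (hr : ∀ a, {b | r a b}.Finite) :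
    (α → R) →ₗ[R] (α → R) where
  toFun := relSum r
  map_add' P Q := funext fun a => by
    simp only [relSum_eq_sum (hr a), Pi.add_apply, Finset.sum_add_distrib]
  map_smul' c P := funext fun a => by
    simp only [relSum_eq_sum (hr a), Pi.smul_apply, smul_eq_mul, Finset.mul_sum, RingHom.id_apply]

@[simp]
theorem coe_relSumₗ (hr : ∀ a, {b | r a b}.Finite) : ⇑(relSumₗ (R := R) r hr) = relSum r := rfl

theorem hasFiniteSupport_pathCount_mul (hr : ∀ a, {b | r a b}.Finite)
    (hs : ∀ b, {c | s b c}.Finite) (P : α → R) (a : α) :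
    Function.HasFiniteSupport fun c => (pathCount r s a c : R) * P c := by
  refine ((hr a).biUnion fun b _ => hs b).subset fun c hc => ?_
  have hc : pathCount r s a c ≠ 0 := fun h0 => hc (by simp [h0])
  obtain ⟨b, hb⟩ := Set.nonempty_of_ncard_ne_zero hc
  exact Set.mem_biUnion hb.1 hb.2

theorem relSum_relSum (hr : ∀ a, {b | r a b}.Finite) (hs : ∀ b, {c | s b c}.Finite)
    (P : α → R) (a : α) : relSum r (relSum s P) a = ∑ᶠ c, (pathCount r s a c : R) * P c := by
  classical
  set T := (hr a).toFinset.biUnion fun b => (hs b).toFinset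
  have hcount : ∀ c, (((hr a).toFinset.filter fun b => s b c).card : R) = pathCount r s a c :=
    fun c => by
      rw [pathCount, ← Set.ncard_coe_finset, Finset.coe_filter]
      simp
  rw [relSum_eq_sum (hr a), Finset.sum_congr rfl fun b _ => relSum_eq_sum (hs b) P,
    Finset.sum_comm' (t' := T) (s' := fun c => (hr a).toFinset.filter fun b => s b c)
      fun b c => by simpa [T] using fun hb hc => ⟨b, hb, hc⟩,
    finsum_eq_sum_of_support_subset (s := T)]
  · simp only [Finset.sum_const, nsmul_eq_mul, hcount]
  · intro c hc
    have hc : pathCount r s a c ≠ 0 := fun h0 => hc (by simp [h0])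
    obtain ⟨b, hb⟩ := Set.nonempty_of_ncard_ne_zero hc
    simp only [T, Finset.coe_biUnion, Set.Finite.coe_toFinset]
    exact Set.mem_biUnion hb.1 hb.2

theorem relSum_zero : relSum r (0 : α → R) = 0 :=
  funext fun _ => relSum_eq_zero fun _ _ => rfl

theorem relSum_add (hr : ∀ a, {b | r a b}.Finite) (P Q : α → R) :
    relSum r (P + Q) = relSum r P + relSum r Q :=
  map_add (relSumₗ r hr) P Q

theorem relSum_sum_smul (hr : ∀ a, {b | r a b}.Finite) (s : Finset ι) (c : ι → R)
    (P : ι → α → R) : relSum r (∑ i ∈ s, c i • P i) = ∑ i ∈ s, c i • relSum r (P i) := by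
  simp only [← coe_relSumₗ hr, map_sum, map_smul]

theorem relSum_of_iff_eq {a : α} (h : ∀ b, r a b ↔ b = a) (P : α → R) : relSum r P a = P a := by
  simp [relSum, h]

end RelSum

/-! ### The operators `h_k` and `e_c^⊥` -/

section Operators

variable {F}

theorem eperp_eq_relSum (c : ℕ) : eperp F c = relSum (flip (VS c)) := rfl

theorem Mh_of_neg {k : ℤ} (hk : k < 0) : Mh F k = 0 :=
  funext fun _ => funext fun _ => if_pos hk

theorem Mh_natCast (k : ℕ) : Mh F k = relSum (HS k) :=
  funext fun _ => funext fun _ => by simp [Mh, relSum]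

theorem Mh_zero_right (k : ℤ) : Mh F k 0 = 0 := by
  rcases lt_or_ge k 0 with hk | hk
  · rw [Mh_of_neg hk, Pi.zero_apply]
  · lift k to ℕ using hk
    rw [Mh_natCast, relSum_zero]

theorem Mh_add (k : ℤ) (P Q : Ptn → F) : Mh F k (P + Q) = Mh F k P + Mh F k Q := by
  rcases lt_or_ge k 0 with hk | hk
  · simp [Mh_of_neg hk]
  · lift k to ℕ using hk
    rw [Mh_natCast, relSum_add (Ptn.finite_setOf_HS k)]

theorem Mh_sum_smul {ι : Type*} (k : ℤ) (s : Finset ι) (c : ι → F) (P : ι → Ptn → F) :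
    Mh F k (∑ i ∈ s, c i • P i) = ∑ i ∈ s, c i • Mh F k (P i) := by
  rcases lt_or_ge k 0 with hk | hk
  · simp [Mh_of_neg hk]
  · lift k to ℕ using hk
    rw [Mh_natCast, relSum_sum_smul (Ptn.finite_setOf_HS k)]

theorem eperp_zero_right (c : ℕ) : eperp F c 0 = 0 := relSum_zero

theorem eperp_sum_smul {ι : Type*} (c : ℕ) (s : Finset ι) (a : ι → F) (P : ι → Ptn → F) :
    eperp F c (∑ i ∈ s, a i • P i) = ∑ i ∈ s, a i • eperp F c (P i) :=
  relSum_sum_smul (Ptn.finite_setOf_VS c) s a P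

theorem Mh_zero_left (P : Ptn → F) : Mh F 0 P = P :=
  funext fun _ => by
    rw [show (0 : ℤ) = ((0 : ℕ) : ℤ) from rfl, Mh_natCast,
      relSum_of_iff_eq fun _ => Ptn.HS_zero_iff]

theorem eperp_zero_left (P : Ptn → F) : eperp F 0 P = P :=
  funext fun _ => by rw [eperp_eq_relSum]; exact relSum_of_iff_eq (fun _ => Ptn.VS_zero_iff) P

theorem Mh_comm (a b : ℤ) (P : Ptn → F) : Mh F a (Mh F b P) = Mh F b (Mh F a P) := by
  rcases lt_or_ge a 0 with ha | ha
  · simp [Mh_of_neg ha, Mh_zero_right]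
  rcases lt_or_ge b 0 with hb | hb
  · simp [Mh_of_neg hb, Mh_zero_right]
  lift a to ℕ using ha
  lift b to ℕ using hb
  simp only [Mh_natCast]
  funext lam
  rw [relSum_relSum (Ptn.finite_setOf_HS a) (Ptn.finite_setOf_HS b),
    relSum_relSum (Ptn.finite_setOf_HS b) (Ptn.finite_setOf_HS a)]
  simp only [pathCount, Ptn.ncard_HS_HS_comm a b]

theorem eperp_comm (c d : ℕ) (P : Ptn → F) : eperp F c (eperp F d P) = eperp F d (eperp F c P) := by
  have hVS : ∀ c nu, {mu | flip (VS c) nu mu}.Finite := Ptn.finite_setOf_VS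
  funext nu
  rw [eperp_eq_relSum, eperp_eq_relSum, relSum_relSum (hVS c) (hVS d),
    relSum_relSum (hVS d) (hVS c)]
  simp only [pathCount, flip, Ptn.ncard_VS_VS_comm c d]

theorem eperp_succ_Mh (c : ℕ) (k : ℤ) (P : Ptn → F) :
    eperp F (c + 1) (Mh F k P) = Mh F k (eperp F (c + 1) P) + Mh F (k - 1) (eperp F c P) := by
  rcases lt_or_ge k 0 with hk | hk
  · simp [Mh_of_neg hk, Mh_of_neg (show k - 1 < 0 by omega), eperp_zero_right]
  lift k to ℕ using hk
  cases k with
  | zero => simp [Mh_zero_left, Mh_of_neg (show (-1 : ℤ) < 0 by norm_num)]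
  | succ k =>
    rw [show ((k + 1 : ℕ) : ℤ) - 1 = k by push_cast; ring]
    simp only [Mh_natCast, eperp_eq_relSum]
    funext nu
    have hVS : ∀ c nu, {mu | flip (VS c) nu mu}.Finite := Ptn.finite_setOf_VS
    rw [Pi.add_apply, relSum_relSum (hVS _) (Ptn.finite_setOf_HS _),
      relSum_relSum (Ptn.finite_setOf_HS _) (hVS _), relSum_relSum (Ptn.finite_setOf_HS _) (hVS _),
      ← finsum_add_distrib (hasFiniteSupport_pathCount_mul (Ptn.finite_setOf_HS _) (hVS _) P nu)
        (hasFiniteSupport_pathCount_mul (Ptn.finite_setOf_HS _) (hVS _) P nu)]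
    refine finsum_congr fun rho => ?_
    rw [← add_mul, ← Nat.cast_add]
    simp only [pathCount, flip, Ptn.ncard_VS_HS_succ]

def DegreeLE (P : Ptn → F) (t : ℕ) : Prop := ∀ μ, P μ ≠ 0 → μ.size ≤ t

theorem exists_degreeLE_of_finite {P : Ptn → F} (hP : (Function.support P).Finite) :
    ∃ t, DegreeLE P t :=
  ⟨hP.toFinset.sup Ptn.size, fun _ hμ => Finset.le_sup (f := Ptn.size) (hP.mem_toFinset.2 hμ)⟩

variable {P : Ptn → F} {t : ℕ}

theorem eperp_eq_zero_of_degreeLE (hP : DegreeLE P t) {c : ℕ} (hc : t < c) : eperp F c P = 0 :=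
  funext fun _ => relSum_eq_zero (r := flip (VS c)) fun mu hmu => by
    by_contra hne
    have := hP mu hne
    have := hmu.2.1
    omega

theorem DegreeLE.eperp (hP : DegreeLE P t) (c : ℕ) : DegreeLE (eperp F c P) (t - c) := by
  intro nu hnu
  by_contra h
  refine hnu (relSum_eq_zero (r := flip (VS c)) fun mu hmu => ?_)
  by_contra hne
  have := hP mu hne
  have := hmu.2.1
  omega

theorem DegreeLE.Mh (hP : DegreeLE P t) (k : ℤ) : DegreeLE (Mh F k P) (t + k.toNat) := by
  intro lam hlam
  rcases lt_or_ge k 0 with hk | hk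
  · simp [Mh_of_neg hk] at hlam
  lift k to ℕ using hk
  rw [Mh_natCast] at hlam
  by_contra h
  refine hlam (relSum_eq_zero fun mu hmu => ?_)
  by_contra hne
  have := hP mu hne
  have := hmu.2.1
  simp only [Int.toNat_natCast] at h
  omega

theorem Sop_eq_sum (hP : DegreeLE P t) {N : ℕ} (hN : t < N) (m : ℤ) :
    Sop F m P = ∑ c ∈ Finset.range N, (-1 : F) ^ c • Mh F (m + c) (eperp F c P) := by
  funext lam
  rw [Sop, finsum_eq_sum_of_support_subset (s := Finset.range N)]
  · simp [Finset.sum_apply]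
  · intro c hc
    by_contra hcN
    simp only [Finset.coe_range, Set.mem_Iio, not_lt] at hcN
    apply hc
    dsimp only
    rw [eperp_eq_zero_of_degreeLE hP (by omega), Mh_zero_right, Pi.zero_apply, mul_zero]

theorem DegreeLE.Sop (hP : DegreeLE P t) (n : ℤ) : DegreeLE (Sop F n P) (t + n.toNat) := by
  intro lam hlam
  rw [Sop_eq_sum hP (Nat.lt_succ_self t), Finset.sum_apply] at hlam
  obtain ⟨c, hct, hc⟩ := Finset.exists_ne_zero_of_sum_ne_zero hlam
  have := Finset.mem_range.1 hct
  have := (hP.eperp c).Mh (n + c) lam (by simpa using hc)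
  omega

/-! ### Normal ordering -/

noncomputable def normalTerm (P : Ptn → F) (a b : ℤ) (c d : ℕ) : Ptn → F :=
  Mh F (a + c) (Mh F (b + d) (eperp F c (eperp F d P)))

noncomputable def normalSum (P : Ptn → F) (a b : ℤ) : Ptn → F :=
  ∑ᶠ cd : ℕ × ℕ, (-1 : F) ^ (cd.1 + cd.2) • normalTerm P a b cd.1 cd.2

theorem normalTerm_eq_zero (hP : DegreeLE P t) (a b : ℤ) {c d : ℕ} (h : t < c + d) :
    normalTerm P a b c d = 0 := by
  have hcd : eperp F c (eperp F d P) = 0 := by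
    by_cases hd : t < d
    · rw [eperp_eq_zero_of_degreeLE hP hd, eperp_zero_right]
    · exact eperp_eq_zero_of_degreeLE (hP.eperp d) (by omega)
  rw [normalTerm, hcd, Mh_zero_right, Mh_zero_right]

theorem normalTerm_comm (P : Ptn → F) (a b : ℤ) (c d : ℕ) :
    normalTerm P a b c d = normalTerm P b a d c := by
  rw [normalTerm, normalTerm, Mh_comm, eperp_comm]

theorem normalSum_comm (P : Ptn → F) (a b : ℤ) : normalSum P a b = normalSum P b a := by
  rw [normalSum, normalSum, ← finsum_comp_equiv (Equiv.prodComm ℕ ℕ)]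
  simp only [Equiv.prodComm_apply, Prod.fst_swap, Prod.snd_swap, normalTerm_comm P a b, add_comm]

theorem normalSum_eq_sum (hP : DegreeLE P t) (a b : ℤ) {N₁ N₂ : ℕ} (h₁ : t < N₁) (h₂ : t < N₂) :
    normalSum P a b = ∑ c ∈ Finset.range N₁, ∑ d ∈ Finset.range N₂,
      (-1 : F) ^ (c + d) • normalTerm P a b c d := by
  rw [normalSum, finsum_eq_sum_of_support_subset (s := Finset.range N₁ ×ˢ Finset.range N₂),
    Finset.sum_product]
  intro cd hcd
  by_contra hmem
  simp only [Finset.coe_product, Finset.coe_range, Set.mem_prod, Set.mem_Iio, not_and_or,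
    not_lt] at hmem
  apply hcd
  dsimp only
  rw [normalTerm_eq_zero hP a b (by omega), smul_zero]

theorem normalTerm_zero_left (P : Ptn → F) (a b : ℤ) (d : ℕ) :
    normalTerm P a b 0 d = Mh F a (Mh F (b + d) (eperp F d P)) := by
  rw [normalTerm, eperp_zero_left, Nat.cast_zero, add_zero]

theorem Mh_eperp_succ_Mh_eperp (P : Ptn → F) (a b : ℤ) (c d : ℕ) :
    Mh F (a + (c + 1 : ℕ)) (eperp F (c + 1) (Mh F (b + d) (eperp F d P))) =
      normalTerm P a b (c + 1) d + normalTerm P (a + 1) (b - 1) c d := by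
  rw [eperp_succ_Mh, Mh_add, normalTerm, normalTerm, show b + d - 1 = b - 1 + d by ring,
    show a + ((c + 1 : ℕ) : ℤ) = a + 1 + c by push_cast; ring]

theorem Sop_Sop_eq (hP : DegreeLE P t) (m n : ℤ) :
    Sop F m (Sop F n P) = normalSum P m n - normalSum P (m + 1) (n - 1) := by
  set K := t + n.toNat + 1
  rw [Sop_eq_sum (hP.Sop n) (show t + n.toNat < K + 1 by omega),
    Sop_eq_sum hP (show t < K + 1 by omega),
    normalSum_eq_sum hP m n (show t < K + 1 by omega) (show t < K + 1 by omega),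
    normalSum_eq_sum hP (m + 1) (n - 1) (show t < K by omega) (show t < K + 1 by omega)]
  have hsign : ∀ (c d : ℕ) (x : Ptn → F), (-1 : F) ^ (c + 1 + d) • x = -((-1 : F) ^ (c + d) • x) :=
    fun c d x => by rw [add_right_comm, pow_succ, mul_neg_one, neg_smul]
  simp only [eperp_sum_smul, Mh_sum_smul, Finset.smul_sum, smul_smul, ← pow_add]
  clear_value K
  conv_lhs => rw [Finset.sum_range_succ']
  conv_rhs => rw [Finset.sum_range_succ']
  simp only [Mh_eperp_succ_Mh_eperp, normalTerm_zero_left, eperp_zero_left, Nat.cast_zero, add_zero,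
    smul_add, Finset.sum_add_distrib, hsign, Finset.sum_neg_distrib]
  abel

end Operators

/-- The Bernstein creation operators satisfy the commutation rule
`S_m ∘ S_n = - S_{n-1} ∘ S_{m+1}` for all integers `m, n`, as operators on the
ring of symmetric functions (the span of the Schur functions, i.e. finitely
supported coefficient functions).  In particular `S_m ∘ S_{m+1} = 0`. -/
theorem bernstein_commutation (m n : ℤ) :
    (∀ P : Ptn → ℚ, (Function.support P).Finite →
      Sop ℚ m (Sop ℚ n P) = -(Sop ℚ (n - 1) (Sop ℚ (m + 1) P))) ∧
    (∀ P : Ptn → ℚ, (Function.support P).Finite →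
      Sop ℚ m (Sop ℚ (m + 1) P) = 0) := by
  refine ⟨fun P hP => ?_, fun P hP => ?_⟩ <;> obtain ⟨t, ht⟩ := exists_degreeLE_of_finite hP
  · rw [Sop_Sop_eq ht, Sop_Sop_eq ht, sub_add_cancel, add_sub_cancel_right, neg_sub,
      normalSum_comm P n, normalSum_comm P (n - 1)]
  · rw [Sop_Sop_eq ht, add_sub_cancel_right, normalSum_comm P (m + 1), sub_self]
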